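/- For every α with 0 < α ≤ 1, the inequality 4 α^α / (α+1)^{α+1} ≥ 1 holds, with equality if and only if α = 1. Consequently the Lin surprisal I*(α) = (1/2)·log₂( 4 α^α / (α+1)^{α+1} ) is nonnegative on (0,1] and vanishes exactly at α = 1. -/

import Mathlib

/-!
Taking logarithms, `log (4 α^α / (α+1)^(α+1)) = 2 log 2 + α log α - (α+1) log (α+1)`, whose
derivative `log α - log (α+1)` is negative. So the ratio is strictly decreasing on `(0, ∞)`,
and it equals `1` at `α = 1`.
-/

open Real Set

noncomputable def linRatio (x : ℝ) : ℝ := 4 * x ^ x / (x + 1) ^ (x + 1)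

lemma linRatio_pos {x : ℝ} (hx : 0 < x) : 0 < linRatio x := by
  unfold linRatio; positivity

lemma linRatio_one : linRatio 1 = 1 := by
  norm_num [linRatio]

lemma log_linRatio {x : ℝ} (hx : 0 < x) :
    log (linRatio x) = 2 * log 2 + (x * log x - (x + 1) * log (x + 1)) := by
  have hx1 : 0 < x + 1 := by linarith
  rw [linRatio, log_div (by positivity) (by positivity), log_mul (by norm_num) (by positivity),
    log_rpow hx, log_rpow hx1, show (4 : ℝ) = 2 ^ 2 by norm_num, log_pow]
  push_cast
  ring

lemma hasDerivAt_mul_log_sub_succ_mul_log {x : ℝ} (hx : 0 < x) :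
    HasDerivAt (fun y : ℝ => y * log y - (y + 1) * log (y + 1)) (log x - log (x + 1)) x := by
  have hsucc := (hasDerivAt_mul_log (by linarith : x + 1 ≠ 0)).comp x
    ((hasDerivAt_id x).add_const 1)
  exact ((hasDerivAt_mul_log hx.ne').sub hsucc).congr_deriv (by ring)

lemma strictAntiOn_mul_log_sub_succ_mul_log :
    StrictAntiOn (fun x : ℝ => x * log x - (x + 1) * log (x + 1)) (Ioi 0) := by
  refine strictAntiOn_of_deriv_neg (convex_Ioi 0)
    (fun x hx => (hasDerivAt_mul_log_sub_succ_mul_log hx).continuousAt.continuousWithinAt)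
    fun x hx => ?_
  rw [interior_Ioi] at hx
  rw [(hasDerivAt_mul_log_sub_succ_mul_log hx).deriv, sub_neg]
  exact log_lt_log hx (lt_add_one x)

lemma strictAntiOn_linRatio : StrictAntiOn linRatio (Ioi 0) := by
  intro x hx y hy hxy
  rw [← log_lt_log_iff (linRatio_pos hy) (linRatio_pos hx), log_linRatio hx, log_linRatio hy]
  linarith [strictAntiOn_mul_log_sub_succ_mul_log hx hy hxy]

theorem linSurprisal_nonneg (α : ℝ) (h0 : 0 < α) (h1 : α ≤ 1) :
    (1 ≤ 4 * α ^ α / (α + 1) ^ (α + 1) ∧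
        (4 * α ^ α / (α + 1) ^ (α + 1) = 1 ↔ α = 1)) ∧
      0 ≤ (1 / 2) * Real.logb 2 (4 * α ^ α / (α + 1) ^ (α + 1)) ∧
      ((1 / 2) * Real.logb 2 (4 * α ^ α / (α + 1) ^ (α + 1)) = 0 ↔ α = 1) := by
  change (1 ≤ linRatio α ∧ (linRatio α = 1 ↔ α = 1)) ∧ 0 ≤ 1 / 2 * logb 2 (linRatio α) ∧
    (1 / 2 * logb 2 (linRatio α) = 0 ↔ α = 1)
  have hone : (1 : ℝ) ∈ Ioi 0 := mem_Ioi.mpr one_pos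
  have hge : 1 ≤ linRatio α := by
    simpa [linRatio_one] using strictAntiOn_linRatio.le_iff_ge hone h0 |>.mpr h1
  have heq : linRatio α = 1 ↔ α = 1 := by
    simpa [linRatio_one, eq_comm] using strictAntiOn_linRatio.eq_iff_eq h0 hone
  have hlogb : logb 2 (linRatio α) = 0 ↔ linRatio α = 1 :=
    ⟨eq_one_of_pos_of_logb_eq_zero one_lt_two (linRatio_pos h0), fun h => h ▸ logb_one⟩
  refine ⟨⟨hge, heq⟩, mul_nonneg (by norm_num) (logb_nonneg one_lt_two hge), ?_⟩
  rw [mul_eq_zero, or_iff_right (by norm_num), hlogb, heq]
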